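/- Let D be the diamond graph with its two triangles T₁ and T₂, and let ζ be a gain function on D. Then (D,ζ) is a gain-line graph (with parameter s) if and only if ζ(T₁) = s or ζ(T₂) = s. -/

import Mathlib

open SimpleGraph

/-- `ψ` is a gain function on `Γ`: on adjacent ordered pairs, reversing the
orientation inverts the gain. -/
def IsGainFun {V G : Type} [Group G] (Γ : SimpleGraph V) (ψ : V → V → G) : Prop :=
  ∀ ⦃u v : V⦄, Γ.Adj u v → ψ v u = (ψ u v)⁻¹

/-- Two gain functions on `Γ` are switching equivalent. -/
def SwitchingEquiv {V G : Type} [Group G] (Γ : SimpleGraph V) (ψ₁ ψ₂ : V → V → G) : Prop :=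
  ∃ f : V → G, ∀ ⦃u v : V⦄, Γ.Adj u v → ψ₂ u v = (f u)⁻¹ * ψ₁ u v * f v

/-- A `G`-phase of `Γ`: a choice of a group element for every incident
(vertex, edge) pair (the non-incident entries of the phase matrix are `0`,
so they carry no data). -/
def GPhase {V : Type} (Γ : SimpleGraph V) (G : Type) : Type :=
  ∀ (v : V) (e : Γ.edgeSet), v ∈ (e : Sym2 V) → G

/-- `Ψ(H) = ψ`: the gain function associated with the phase `H` (with parameter `s₁`)
is `ψ`, i.e. `ψ(u,v) = s₁ · H(u,e) · H(v,e)⁻¹` for `e = {u,v}`. -/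
def PsiEq {V G : Type} [Group G] {Γ : SimpleGraph V} (s₁ : G) (H : GPhase Γ G)
    (ψ : V → V → G) : Prop :=
  ∀ ⦃u v : V⦄ (h : Γ.Adj u v),
    ψ u v = s₁ * H u ⟨s(u, v), h⟩ (Sym2.mem_mk_left u v)
      * (H v ⟨s(u, v), h⟩ (Sym2.mem_mk_right u v))⁻¹

/-- `Ψ_L(H) = ζ`: the gain function on the line graph associated with the phase `H`
(with parameter `s`) is `ζ`, i.e. `ζ(e_p,e_q) = s · H(w,e_p)⁻¹ · H(w,e_q)` whenever
`w` is a common endpoint of the distinct edges `e_p, e_q`. -/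
def PsiLEq {V G : Type} [Group G] {Γ : SimpleGraph V} (s : G) (H : GPhase Γ G)
    (ζ : Γ.edgeSet → Γ.edgeSet → G) : Prop :=
  ∀ (p q : Γ.edgeSet) (w : V) (hp : w ∈ (p : Sym2 V)) (hq : w ∈ (q : Sym2 V)), p ≠ q →
    ζ p q = s * (H w p hp)⁻¹ * H w q hq

/-- `(L, ζ)` is a gain-line graph (with parameter `s`): there are a graph `Γ`
with `L = L(Γ)` (up to isomorphism) and a `G`-phase `H` of `Γ` with `Ψ_L(H) = ζ`. -/
def IsGainLine {VL G : Type} [Group G] (s : G) (L : SimpleGraph VL) (ζ : VL → VL → G) : Prop :=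
  ∃ (V' : Type) (Γ : SimpleGraph V') (φ : L ≃g Γ.lineGraph) (H : GPhase Γ G),
    PsiLEq s H fun p q => ζ (φ.symm p) (φ.symm q)
/-- The diamond graph `D` (`K₄` minus one edge): the two triangles `T₁ = 0 1 2` and
`T₂ = 0 1 3` share the edge `{0, 1}`, and `2 ≁ 3`. -/
def diamondGraph : SimpleGraph (Fin 4) :=
  SimpleGraph.fromRel (fun u v =>
    (u = 0 ∧ v = 1) ∨ (u = 1 ∧ v = 2) ∨ (u = 0 ∧ v = 2) ∨ (u = 1 ∧ v = 3) ∨ (u = 0 ∧ v = 3))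

/-!
Since `s = s⁻¹`, the identity `ζ = s · H(w,p)⁻¹ · H(w,q)` is `s ζ = H(w,p)⁻¹ · H(w,q)`, and the
triangle gains of `s ζ` are `s` times those of `ζ`; so one may take `s = 1`. Then three edges
of `Γ` through one vertex span a triangle of `L(Γ)` of gain `1`. In a realisation of `D` as a
line graph, the edge realising vertex `0` has two endpoints and meets the edges realising `1`,
`2`, `3`; the edges realising `2` and `3` are disjoint, so the edge realising `1` passes through
the same endpoint as one of them, and that triangle has gain `1`. Conversely, `D` is the line
graph of the paw (a triangle `0 1 2` with a pendant edge `0 3`), with `T₁` realised by the three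
edges at `0`; if `T₁` has gain `1` a phase can be written down explicitly, and the case of `T₂`
follows by the automorphism of `D` exchanging `2` and `3`.
-/

lemma exists_common_mem_of_lineGraph_adj {V : Type} {Γ : SimpleGraph V} {p q r t : Γ.edgeSet}
    (hq : Γ.lineGraph.Adj p q) (hr : Γ.lineGraph.Adj p r) (ht : Γ.lineGraph.Adj p t)
    (hrt : r ≠ t) (hnrt : ¬ Γ.lineGraph.Adj r t) :
    ∃ w ∈ (p : Sym2 V), w ∈ (q : Sym2 V) ∧ (w ∈ (r : Sym2 V) ∨ w ∈ (t : Sym2 V)) := by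
  obtain ⟨-, u, hup, huq⟩ := lineGraph_adj_iff_exists.1 hq
  obtain ⟨-, v, hvp, hvr⟩ := lineGraph_adj_iff_exists.1 hr
  obtain ⟨-, x, hxp, hxt⟩ := lineGraph_adj_iff_exists.1 ht
  have hvx : v ≠ x := by
    rintro rfl
    exact hnrt (lineGraph_adj_iff_exists.2 ⟨hrt, v, hvr, hxt⟩)
  rw [(Sym2.mem_and_mem_iff hvx).1 ⟨hvp, hxp⟩, Sym2.mem_iff] at hup
  rcases hup with rfl | rfl
  exacts [⟨u, hvp, huq, .inl hvr⟩, ⟨u, hxp, huq, .inr hxt⟩]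

section GainFunctions

variable {V VL G : Type} [Group G]

lemma IsGainFun.const_mul {Γ : SimpleGraph V} {ζ : V → V → G} (hζ : IsGainFun Γ ζ) {s : G}
    (hs : s * s = 1) (hsc : ∀ g : G, s * g = g * s) : IsGainFun Γ fun u v => s * ζ u v :=
  fun _ _ h => by dsimp only; rw [hζ h, mul_inv_rev, inv_eq_of_mul_eq_one_right hs, hsc]

lemma IsGainFun.comp_iso {L L' : SimpleGraph V} {θ : V → V → G} (hθ : IsGainFun L' θ)
    (e : L ≃g L') : IsGainFun L fun u v => θ (e u) (e v) :=
  fun _ _ h => hθ (e.map_adj_iff.2 h)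

lemma const_mul_mul_const_mul_mul_const_mul_eq_one_iff {s : G} (hs : s * s = 1)
    (hsc : ∀ g : G, s * g = g * s) (a b c : G) :
    s * a * (s * b) * (s * c) = 1 ↔ a * b * c = s := by
  have hcomm : ∀ g h : G, g * (s * h) = s * (g * h) := fun g h => by
    rw [← mul_assoc, ← hsc, mul_assoc]
  simp only [mul_assoc, hcomm]
  rw [← mul_assoc s s, hs, one_mul, mul_eq_one_iff_inv_eq, inv_eq_of_mul_eq_one_right hs, eq_comm]

lemma PsiLEq.mul_mul_eq_one {Γ : SimpleGraph V} {H : GPhase Γ G}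
    {θ : Γ.edgeSet → Γ.edgeSet → G} (hH : PsiLEq 1 H θ) {p q r : Γ.edgeSet} (hpq : p ≠ q)
    (hqr : q ≠ r) (hrp : r ≠ p) {w : V} (hp : w ∈ (p : Sym2 V)) (hq : w ∈ (q : Sym2 V))
    (hr : w ∈ (r : Sym2 V)) : θ p q * θ q r * θ r p = 1 := by
  rw [hH p q w hp hq hpq, hH q r w hq hr hqr, hH r p w hr hp hrp]
  group

lemma isGainLine_iff_isGainLine_one {s : G} (hs : s * s = 1) {L : SimpleGraph VL}
    {ζ : VL → VL → G} : IsGainLine s L ζ ↔ IsGainLine 1 L fun u v => s * ζ u v := by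
  have key : ∀ x y : G, x = s * y ↔ s * x = y := fun x y => by
    rw [← eq_inv_mul_iff_mul_eq, inv_eq_of_mul_eq_one_right hs]
  simp only [IsGainLine, PsiLEq, one_mul, mul_assoc, key]

lemma IsGainLine.comp_iso {s : G} {L L' : SimpleGraph VL} {ζ : VL → VL → G}
    (h : IsGainLine s L' ζ) (e : L ≃g L') : IsGainLine s L fun u v => ζ (e u) (e v) := by
  obtain ⟨V', Γ, φ, H, hH⟩ := h
  exact ⟨V', Γ, e.trans φ, H, by simpa using hH⟩

lemma isGainLine_of_lineGraph_iso {V : Type} (s : G) {L : SimpleGraph VL} {Γ : SimpleGraph V}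
    (φ : L ≃g Γ.lineGraph) (ζ : VL → VL → G) (h : V → VL → G)
    (hζ : ∀ i j w, i ≠ j → w ∈ (φ i : Sym2 V) → w ∈ (φ j : Sym2 V) →
      ζ i j = s * (h w i)⁻¹ * h w j) :
    IsGainLine s L ζ := by
  refine ⟨V, Γ, φ, fun w e _ => h w (φ.symm e), fun p q w hp hq hpq => ?_⟩
  obtain ⟨i, rfl⟩ := φ.surjective p
  obtain ⟨j, rfl⟩ := φ.surjective q
  simpa using hζ i j w (ne_of_apply_ne φ hpq) hp hq

lemma IsGainLine.mul_mul_eq_one_or {L : SimpleGraph VL} {θ : VL → VL → G}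
    (h : IsGainLine 1 L θ) {a b c d : VL} (hab : L.Adj a b) (hac : L.Adj a c)
    (had : L.Adj a d) (hbc : b ≠ c) (hbd : b ≠ d) (hcd : c ≠ d) (hncd : ¬ L.Adj c d) :
    θ a b * θ b c * θ c a = 1 ∨ θ a b * θ b d * θ d a = 1 := by
  obtain ⟨V, Γ, φ, H, hH⟩ := h
  have hφ : ∀ {u v}, L.Adj u v → Γ.lineGraph.Adj (φ u) (φ v) := φ.map_adj_iff.2
  have hφne : ∀ {u v}, u ≠ v → φ u ≠ φ v := φ.injective.ne
  obtain ⟨w, hwa, hwb, hwc | hwd⟩ := exists_common_mem_of_lineGraph_adj (hφ hab) (hφ hac)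
    (hφ had) (hφne hcd) (mt φ.map_adj_iff.1 hncd)
  · left
    simpa using hH.mul_mul_eq_one (hφne hab.ne) (hφne hbc) (hφne hac.ne.symm) hwa hwb hwc
  · right
    simpa using hH.mul_mul_eq_one (hφne hab.ne) (hφne hbd) (hφne had.ne.symm) hwa hwb hwd

end GainFunctions

instance : DecidableRel diamondGraph.Adj :=
  fun u v => decidable_of_iff _ (fromRel_adj _ u v).symm

def pawGraph : SimpleGraph (Fin 4) :=
  fromRel fun u v => (u = 0 ∧ v = 1) ∨ (u = 0 ∧ v = 2) ∨ (u = 0 ∧ v = 3) ∨ (u = 1 ∧ v = 2)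

instance : DecidableRel pawGraph.Adj :=
  fun u v => decidable_of_iff _ (fromRel_adj _ u v).symm

def pawEdge : Fin 4 → Sym2 (Fin 4) := ![s(0, 1), s(0, 2), s(0, 3), s(1, 2)]

lemma pawEdge_mem_edgeSet : ∀ i, pawEdge i ∈ pawGraph.edgeSet := by decide

noncomputable def diamondIsoLineGraphPaw : diamondGraph ≃g pawGraph.lineGraph where
  toEquiv := Equiv.ofBijective (fun i => ⟨pawEdge i, pawEdge_mem_edgeSet i⟩) <| by
    refine ⟨fun i j h => ?_, by decide⟩
    revert i j; decide
  map_rel_iff' {i j} := by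
    rw [lineGraph_adj_iff_exists]
    revert i j; decide

@[simp] lemma coe_diamondIsoLineGraphPaw (i : Fin 4) :
    (diamondIsoLineGraphPaw i : Sym2 (Fin 4)) = pawEdge i := rfl

def diamondSwap : diamondGraph ≃g diamondGraph where
  toEquiv := ⟨![0, 1, 3, 2], ![0, 1, 3, 2], by decide, by decide⟩
  map_rel_iff' {i j} := by revert i j; decide

lemma diamondGraph_isGainLine_one_of_mul_mul_eq_one {G : Type} [Group G]
    {θ : Fin 4 → Fin 4 → G} (hθ : IsGainFun diamondGraph θ)
    (hT : θ 0 1 * θ 1 2 * θ 2 0 = 1) : IsGainLine 1 diamondGraph θ := by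
  have h10 : θ 1 0 = (θ 0 1)⁻¹ := hθ (by decide)
  have h20 : θ 2 0 = (θ 0 2)⁻¹ := hθ (by decide)
  have h21 : θ 2 1 = (θ 1 2)⁻¹ := hθ (by decide)
  have h30 : θ 3 0 = (θ 0 3)⁻¹ := hθ (by decide)
  have h31 : θ 3 1 = (θ 1 3)⁻¹ := hθ (by decide)
  have h12 : θ 1 2 = (θ 0 1)⁻¹ * θ 0 2 := by
    rw [h20, mul_inv_eq_one] at hT
    rw [← hT, inv_mul_cancel_left]
  -- row `w` is the phase at the vertex `w` of the paw, indexed by the vertices of `D`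
  refine isGainLine_of_lineGraph_iso 1 diamondIsoLineGraphPaw θ
    ![![1, θ 0 1, θ 0 2, 1], ![1, 1, 1, θ 0 3], ![1, 1, 1, θ 1 3], 1] ?_
  intro i j w hij hi hj
  simp only [coe_diamondIsoLineGraphPaw] at hi hj
  fin_cases i <;> fin_cases j <;> fin_cases w <;> simp_all +decide

lemma diamondGraph_isGainLine_one_iff {G : Type} [Group G] {θ : Fin 4 → Fin 4 → G}
    (hθ : IsGainFun diamondGraph θ) :
    IsGainLine 1 diamondGraph θ ↔ θ 0 1 * θ 1 2 * θ 2 0 = 1 ∨ θ 0 1 * θ 1 3 * θ 3 0 = 1 := by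
  refine ⟨fun h => h.mul_mul_eq_one_or (c := 2) (d := 3) (by decide) (by decide) (by decide)
    (by decide) (by decide) (by decide) (by decide), ?_⟩
  rintro (hT | hT)
  · exact diamondGraph_isGainLine_one_of_mul_mul_eq_one hθ hT
  · simpa using (diamondGraph_isGainLine_one_of_mul_mul_eq_one (hθ.comp_iso diamondSwap)
      hT).comp_iso diamondSwap.symm

/-- `(D, ζ)` is a gain-line graph if and only if at least one of the two triangles of
the diamond has gain `s` (part of Eq. (3.3)). -/
theorem diamondGraph_gainLine_iff
    {G : Type} [Group G] (s : G) (hs : s * s = 1) (hsc : ∀ g : G, s * g = g * s)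
    (ζ : Fin 4 → Fin 4 → G) (hζ : IsGainFun diamondGraph ζ) :
    IsGainLine s diamondGraph ζ ↔
      (ζ 0 1 * ζ 1 2 * ζ 2 0 = s ∨ ζ 0 1 * ζ 1 3 * ζ 3 0 = s) := by
  rw [isGainLine_iff_isGainLine_one hs, diamondGraph_isGainLine_one_iff (hζ.const_mul hs hsc),
    const_mul_mul_const_mul_mul_const_mul_eq_one_iff hs hsc,
    const_mul_mul_const_mul_mul_const_mul_eq_one_iff hs hsc]
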